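/- arXiv:2411.03972 — 3 statements merged into one kernel-verified Lean document; each statement's English description precedes it below -/
import Mathlib

section
/- Let B be an N×M complex matrix, A = B B†, and let y : ℝ → ℂ^N be twice differentiable with ÿ(t) = −A y(t) for all t. Define ψ(t) = (ẏ(t), i B† y(t)) ∈ ℂ^{N+M} and the block matrix H = −[[0, B], [B†, 0]] of size (N+M)×(N+M). Then ψ satisfies the Schrödinger-type equation i ψ′(t) = H ψ(t) for all t. -/
open Matrix

section Derivatives

variable {𝕜 : Type*} [NontriviallyNormedField 𝕜] {E : Type*} [NormedAddCommGroup E]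
  [NormedSpace 𝕜 E] {ι κ : Type*} {x : 𝕜}

theorem HasDerivAt.sumElim [Fintype ι] [Fintype κ] {f : 𝕜 → ι → E} {g : 𝕜 → κ → E}
    {f' : ι → E} {g' : κ → E}
    (hf : HasDerivAt f f' x) (hg : HasDerivAt g g' x) :
    HasDerivAt (fun t => Sum.elim (f t) (g t)) (Sum.elim f' g') x := by
  rw [hasDerivAt_pi] at hf hg ⊢
  rintro (i | j)
  · exact hf i
  · exact hg j

theorem HasDerivAt.const_mulVec [Fintype ι] {R : Type*} [NormedCommRing R] [NormedAlgebra 𝕜 R]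
    (C : Matrix κ ι R) {f : 𝕜 → ι → R} {f' : ι → R} (hf : HasDerivAt f f' x) :
    HasDerivAt (fun t => C *ᵥ f t) (C *ᵥ f') x := by
  rw [hasDerivAt_pi] at hf ⊢
  intro i
  simp only [mulVec, dotProduct]
  exact HasDerivAt.fun_sum fun j _ => (hf j).const_mul (C i j)

end Derivatives

theorem fromBlocks_zero_zero_mulVec_sumElim {l m n o R : Type*} [Fintype l] [Fintype m]
    [NonUnitalNonAssocSemiring R] (B : Matrix n m R) (C : Matrix o l R) (u : l → R)
    (w : m → R) :
    fromBlocks 0 B C 0 *ᵥ Sum.elim u w = Sum.elim (B *ᵥ w) (C *ᵥ u) := by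
  simp [fromBlocks_mulVec]

/-- The incidence-matrix reformulation of the harmonic oscillator model:
if `ÿ = -A y` with `A = B Bᴴ`, then `ψ(t) = (ẏ(t), i Bᴴ y(t))` satisfies the
Schrödinger-type equation `i ψ'(t) = H ψ(t)` with `H = -[[0, B], [Bᴴ, 0]]`,
equivalently `ψ'(t) = -i H ψ(t)`. -/
theorem harmonic_oscillator_schrodinger_reformulation
    {N M : ℕ} (B : Matrix (Fin N) (Fin M) ℂ) (A : Matrix (Fin N) (Fin N) ℂ)
    (hA : A = B * Bᴴ)
    (y v a : ℝ → Fin N → ℂ)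
    (hy : ∀ t, HasDerivAt y (v t) t)
    (hv : ∀ t, HasDerivAt v (a t) t)
    (ha : ∀ t, a t = -(A *ᵥ y t))
    (ψ : ℝ → (Fin N ⊕ Fin M → ℂ))
    (hψ : ψ = fun t => Sum.elim (v t) (Complex.I • (Bᴴ *ᵥ y t)))
    (H : Matrix (Fin N ⊕ Fin M) (Fin N ⊕ Fin M) ℂ)
    (hH : H = -Matrix.fromBlocks 0 B Bᴴ 0) :
    ∀ t, HasDerivAt ψ (-Complex.I • (H *ᵥ ψ t)) t := by
  subst hψ hH hA
  intro t
  have hψ' : HasDerivAt (fun t => Sum.elim (v t) (Complex.I • (Bᴴ *ᵥ y t)))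
      (Sum.elim (a t) (Complex.I • (Bᴴ *ᵥ v t))) t :=
    (hv t).sumElim (((hy t).const_mulVec Bᴴ).const_smul Complex.I)
  convert hψ' using 1
  rw [ha, neg_mulVec, fromBlocks_zero_zero_mulVec_sumElim, mulVec_smul, ← mulVec_mulVec]
  -- on the first block, `i • i • (B * Bᴴ) y = -(A y)` since `i² = -1`
  ext (i | j) <;> simp [← mul_assoc]
end

section
/- For every natural number m ≥ 1, the integral ∫₀^{π/2} sin(2θ)^m dθ satisfies ∫₀^{π/2} sin(2θ)^m dθ ≥ (1/2) √(π/(2m)). Combined with the upper bound ∫₀^{π/2} sin(2θ)^m dθ ≤ ∫_{−∞}^{∞} e^{−2m x²} dx = √(π/(2m)), the normalization of the angle density sin^m(2θ) is within a constant factor of that of the Gaussian e^{−2m(θ−π/4)²}. -/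
/-!
After the substitution `u = 2θ` the integral is half the Wallis integral `Iₙ = ∫₀^π sinⁿ`.
The reduction formula `(n + 2) Iₙ₊₂ = (n + 1) Iₙ` makes `(n + 1) Iₙ₊₁ Iₙ = 2π` invariant in `n`,
and since `Iₙ` is decreasing this squeezes `Iₙ²` between `2π/(n + 1)` and `2π/n`.
-/

open MeasureTheory intervalIntegral Real

theorem succ_mul_integral_sin_pow_succ_mul_integral_sin_pow (n : ℕ) :
    ((n : ℝ) + 1) * ((∫ x in 0..π, sin x ^ (n + 1)) * ∫ x in 0..π, sin x ^ n) = 2 * π := by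
  induction n with
  | zero => simp [integral_sin]; ring
  | succ k ih =>
    rw [integral_sin_pow]
    simp only [sin_zero, sin_pi, ne_eq, Nat.add_one_ne_zero, not_false_eq_true, zero_pow,
      zero_mul, sub_self, zero_div, zero_add]
    push_cast
    field_simp
    linear_combination ((k : ℝ) + 2) * ih

theorem two_mul_pi_div_succ_le_sq_integral_sin_pow (n : ℕ) :
    2 * π / (n + 1) ≤ (∫ x in 0..π, sin x ^ n) ^ 2 := by
  rw [div_le_iff₀ (by positivity), ← succ_mul_integral_sin_pow_succ_mul_integral_sin_pow n,
    mul_comm _ ((n : ℝ) + 1), sq]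
  gcongr
  · exact (integral_sin_pow_pos (n := _)).le
  · exact integral_sin_pow_succ_le n

theorem sq_integral_sin_pow_le_two_mul_pi_div {n : ℕ} (hn : n ≠ 0) :
    (∫ x in 0..π, sin x ^ n) ^ 2 ≤ 2 * π / n := by
  obtain ⟨k, rfl⟩ := Nat.exists_eq_succ_of_ne_zero hn
  rw [le_div_iff₀ (by positivity), ← succ_mul_integral_sin_pow_succ_mul_integral_sin_pow k,
    Nat.cast_succ, mul_comm _ ((k : ℝ) + 1), sq]
  gcongr
  · exact (integral_sin_pow_pos (n := _)).le
  · exact integral_sin_pow_succ_le k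

theorem integral_sin_two_mul_pow (n : ℕ) :
    ∫ θ in 0..π / 2, sin (2 * θ) ^ n = (1 / 2) * ∫ x in 0..π, sin x ^ n := by
  rw [integral_comp_mul_left (fun x => sin x ^ n) two_ne_zero, mul_zero,
    mul_div_cancel₀ π two_ne_zero, one_div, smul_eq_mul]

/-- The normalization constant of the angle density `sin^m(2θ)` is within a constant
factor of that of the Gaussian `e^{-2m(θ-π/4)²}`: for `m ≥ 1`,
`(1/2)√(π/(2m)) ≤ ∫₀^{π/2} sin(2θ)^m dθ ≤ ∫_ℝ e^{-2mx²} dx = √(π/(2m))`. -/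
theorem integral_sin_two_theta_pow_bounds (m : ℕ) (hm : 1 ≤ m) :
    (1 / 2) * Real.sqrt (Real.pi / (2 * m)) ≤
        (∫ θ in (0 : ℝ)..(Real.pi / 2), Real.sin (2 * θ) ^ m) ∧
      (∫ θ in (0 : ℝ)..(Real.pi / 2), Real.sin (2 * θ) ^ m) ≤
        (∫ x : ℝ, Real.exp (-(2 * m * x ^ 2))) ∧
      (∫ x : ℝ, Real.exp (-(2 * m * x ^ 2))) = Real.sqrt (Real.pi / (2 * m)) := by
  have hm' : (1 : ℝ) ≤ m := by exact_mod_cast hm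
  have gaussian : ∫ x : ℝ, exp (-(2 * m * x ^ 2)) = √(π / (2 * m)) := by
    simpa only [neg_mul] using integral_gaussian (2 * m)
  have wallis_nonneg := (integral_sin_pow_pos (n := m)).le
  rw [gaussian, integral_sin_two_mul_pow]
  refine ⟨?_, ?_, rfl⟩
  · gcongr
    rw [sqrt_le_left wallis_nonneg]
    calc π / (2 * m) ≤ 2 * π / (m + 1) := by
          rw [div_le_div_iff₀ (by positivity) (by positivity)]
          nlinarith [pi_pos]
      _ ≤ _ := two_mul_pi_div_succ_le_sq_integral_sin_pow m
  · refine le_sqrt_of_sq_le ?_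
    calc ((1 / 2) * ∫ x in 0..π, sin x ^ m) ^ 2
        = (1 / 4) * (∫ x in 0..π, sin x ^ m) ^ 2 := by ring
      _ ≤ (1 / 4) * (2 * π / m) := by
          gcongr; exact sq_integral_sin_pow_le_two_mul_pi_div (by omega)
      _ = π / (2 * m) := by field_simp; ring
end

section
/- Let B be an N×M complex matrix, A = B B†, f : ℝ → ℂ^N continuous, and let y : ℝ → ℂ^N be twice differentiable with ÿ(t) = −A y(t) + f(t) for all t. Define ψ(t) = (ẏ(t), i B† y(t)) ∈ ℂ^{N+M} and H = −[[0, B], [B†, 0]]. Then ψ satisfies ψ′(t) = −iH ψ(t) + (f(t), 0), i.e., the inhomogeneous Schrödinger-type equation whose forcing term is f(t) in the first N components and 0 in the last M components. -/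
/-! Differentiating `ψ = (ẏ, i Bᴴ y)` block by block gives `(-B Bᴴ y + f, i Bᴴ ẏ)`, and since
`i² = -1`, applying `-iH` to `ψ` produces `(-B Bᴴ y, i Bᴴ ẏ)`: the two agree up to the
forcing term `(f, 0)`. -/

open Matrix

section Derivatives

variable {𝕜 : Type*} [NontriviallyNormedField 𝕜]

theorem hasDerivAt_sumElim {ι κ E : Type*} [Fintype ι] [Fintype κ] [NormedAddCommGroup E]
    [NormedSpace 𝕜 E] {u : 𝕜 → ι → E} {w : 𝕜 → κ → E} {u' : ι → E} {w' : κ → E} {t : 𝕜}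
    (hu : HasDerivAt u u' t) (hw : HasDerivAt w w' t) :
    HasDerivAt (fun s => Sum.elim (u s) (w s)) (Sum.elim u' w') t := by
  refine hasDerivAt_pi.mpr ?_
  rintro (i | j)
  · exact hasDerivAt_pi.mp hu i
  · exact hasDerivAt_pi.mp hw j

theorem HasDerivAt.matrix_mulVec {ι κ 𝔸 : Type*} [Fintype ι] [Fintype κ] [NormedRing 𝔸]
    [NormedAlgebra 𝕜 𝔸] (C : Matrix κ ι 𝔸) {y : 𝕜 → ι → 𝔸} {y' : ι → 𝔸} {t : 𝕜}
    (hy : HasDerivAt y y' t) :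
    HasDerivAt (fun s => C *ᵥ y s) (C *ᵥ y') t := by
  refine hasDerivAt_pi.mpr fun i => ?_
  simp only [mulVec, dotProduct]
  exact HasDerivAt.fun_sum fun k _ => (hasDerivAt_pi.mp hy k).const_mul (C i k)

end Derivatives

theorem neg_I_smul_neg_fromBlocks_mulVec_sumElim {ι κ : Type*} [Fintype ι] [Fintype κ]
    (B : Matrix ι κ ℂ) (C : Matrix κ ι ℂ) (u : ι → ℂ) (w : κ → ℂ) :
    -Complex.I • (-fromBlocks 0 B C 0 *ᵥ Sum.elim u (Complex.I • w)) =
      Sum.elim (-(B *ᵥ w)) (Complex.I • (C *ᵥ u)) := by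
  rw [neg_mulVec, smul_neg, neg_smul, neg_neg, fromBlocks_mulVec]
  simp only [Sum.elim_comp_inl, Sum.elim_comp_inr, zero_mulVec, zero_add, mulVec_smul]
  ext (i | j) <;> simp [← mul_assoc]

theorem inhomogeneous_harmonic_oscillator_schrodinger_general
    {N M : ℕ} (B : Matrix (Fin N) (Fin M) ℂ) (A : Matrix (Fin N) (Fin N) ℂ)
    (hA : A = B * Bᴴ)
    (f : ℝ → Fin N → ℂ)
    (y v a : ℝ → Fin N → ℂ)
    (hy : ∀ t, HasDerivAt y (v t) t)
    (hv : ∀ t, HasDerivAt v (a t) t)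
    (ha : ∀ t, a t = -(A *ᵥ y t) + f t)
    (ψ : ℝ → (Fin N ⊕ Fin M → ℂ))
    (hψ : ψ = fun t => Sum.elim (v t) (Complex.I • (Bᴴ *ᵥ y t)))
    (H : Matrix (Fin N ⊕ Fin M) (Fin N ⊕ Fin M) ℂ)
    (hH : H = -Matrix.fromBlocks 0 B Bᴴ 0) :
    ∀ t, HasDerivAt ψ (-Complex.I • (H *ᵥ ψ t) + Sum.elim (f t) 0) t := by
  intro t
  subst hψ hH
  have hψ' : HasDerivAt _ (Sum.elim (a t) (Complex.I • (Bᴴ *ᵥ v t))) t :=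
    hasDerivAt_sumElim (hv t) (((hy t).matrix_mulVec Bᴴ).fun_const_smul Complex.I)
  convert hψ' using 1
  rw [neg_I_smul_neg_fromBlocks_mulVec_sumElim, ha t, hA, ← mulVec_mulVec,
    ← Sum.elim_add_add, add_zero]

/-- The inhomogeneous harmonic oscillator `ÿ = -A y + f` with `A = B Bᴴ`, in the
incidence-matrix reformulation: `ψ(t) = (ẏ(t), i Bᴴ y(t))` satisfies the forced
Schrödinger-type equation `ψ'(t) = -iH ψ(t) + (f(t), 0)` with
`H = -[[0, B], [Bᴴ, 0]]`. -/
theorem inhomogeneous_harmonic_oscillator_schrodinger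
    {N M : ℕ} (B : Matrix (Fin N) (Fin M) ℂ) (A : Matrix (Fin N) (Fin N) ℂ)
    (hA : A = B * Bᴴ)
    (f : ℝ → Fin N → ℂ) (hf : Continuous f)
    (y v a : ℝ → Fin N → ℂ)
    (hy : ∀ t, HasDerivAt y (v t) t)
    (hv : ∀ t, HasDerivAt v (a t) t)
    (ha : ∀ t, a t = -(A *ᵥ y t) + f t)
    (ψ : ℝ → (Fin N ⊕ Fin M → ℂ))
    (hψ : ψ = fun t => Sum.elim (v t) (Complex.I • (Bᴴ *ᵥ y t)))
    (H : Matrix (Fin N ⊕ Fin M) (Fin N ⊕ Fin M) ℂ)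
    (hH : H = -Matrix.fromBlocks 0 B Bᴴ 0) :
    ∀ t, HasDerivAt ψ (-Complex.I • (H *ᵥ ψ t) + Sum.elim (f t) 0) t :=
  inhomogeneous_harmonic_oscillator_schrodinger_general B A hA f y v a hy hv ha ψ hψ H hH
end
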